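/- arXiv:2103.06176 — 4 statements merged into one kernel-verified Lean document; each statement's English description precedes it below -/
import Mathlib

section
/- For every integer n ≥ 2 and every real number λ, the alternative characteristic polynomial satisfies d_n(λ) = ((−1)^{n−1} / (n · 2^{n−1})) · Σ_{k=1}^{⌈n/2⌉} C(n, 2k−1) · (λ/n − 2)^{n−(2k−1)} · ((λ/n − 2)² − 4)^{k−1}, where C(n,j) denotes the binomial coefficient and ⌈x⌉ is the least integer greater than or equal to x. -/
/-!
Let `T` be the tridiagonal matrix with `2` on the diagonal and `-1` next to it. Each column of
`K_n` is the discrete Green's function of the second difference with zero boundary values, so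
`T * K_n = n⁻¹ • 1` and `T * (1 - λ • K_n)` is again tridiagonal, with diagonal `2 - λ/n`.
Determinants of such matrices satisfy the three-term recurrence of the Chebyshev polynomials `S`;
since `det T = S_{n-1}(2) = n`, this gives `d_n(λ) = S_{n-1}(2 - λ/n) / n`. On the other side, the
coefficient of `√y` in `(x + √y)^n` obeys the recurrence of `2^{n-1} S_{n-1}(x)` when
`y = x² - 4`, because `x ± √(x² - 4)` are the roots of `t² - 2x t + 4`. The sign comes from
`S_{n-1}(-x) = (-1)^{n-1} S_{n-1}(x)` at `x = λ/n - 2`.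
-/

open Finset

noncomputable section

/-- The `(n-1) × (n-1)` symmetric matrix `K_n` with entries
`K_n(j,k) = min(j,k)/n − jk/n²` for `1 ≤ j, k ≤ n−1`. -/
def Kmat (n : ℕ) : Matrix (Fin (n - 1)) (Fin (n - 1)) ℝ := fun j k =>
  ((min (j.1 + 1) (k.1 + 1) : ℕ) : ℝ) / n
    - ((j.1 + 1 : ℕ) : ℝ) * ((k.1 + 1 : ℕ) : ℝ) / (n : ℝ) ^ 2

/-- The alternative characteristic polynomial `d_n(λ) = det(I_{n−1} − λ K_n)`. -/
def dpoly (n : ℕ) (lam : ℝ) : ℝ := Matrix.det (1 - lam • Kmat n)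

open Polynomial Matrix

namespace Polynomial.Chebyshev

theorem S_eval_neg {R : Type*} [CommRing R] (n : ℕ) (x : R) :
    (S R n).eval (-x) = (-1) ^ n * (S R n).eval x := by
  induction n using Nat.twoStepInduction with
  | zero => simp
  | one => simp
  | more n ih₀ ih₁ =>
    push_cast at ih₀ ih₁ ⊢
    simp only [S_add_two, eval_sub, eval_mul, eval_X, ih₀, ih₁]
    ring

end Polynomial.Chebyshev

section BinomialSums

variable {R : Type*} [CommRing R]

/-- `(x + √y)^n = evenBinomialSum n x y + √y * oddBinomialSum n x y`. -/
def evenBinomialSum (n : ℕ) (x y : R) : R :=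
  ∑ k ∈ range (n + 1), (n.choose (2 * k) : R) * x ^ (n - 2 * k) * y ^ k

def oddBinomialSum (n : ℕ) (x y : R) : R :=
  ∑ k ∈ range n, (n.choose (2 * k + 1) : R) * x ^ (n - (2 * k + 1)) * y ^ k

theorem choose_mul_pow_sub_mul (n j : ℕ) (x : R) :
    (n.choose j : R) * x ^ (n - j) * x = n.choose j * x ^ (n + 1 - j) := by
  rcases le_or_gt j n with hj | hj
  · rw [mul_assoc, ← pow_succ, Nat.sub_add_comm hj]
  · simp [Nat.choose_eq_zero_of_lt hj]

theorem oddBinomialSum_eq_sum_range_succ (n : ℕ) (x y : R) :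
    oddBinomialSum n x y =
      ∑ k ∈ range (n + 1), (n.choose (2 * k + 1) : R) * x ^ (n - (2 * k + 1)) * y ^ k := by
  rw [sum_range_succ, Nat.choose_eq_zero_of_lt (by omega : n < 2 * n + 1), oddBinomialSum]
  simp

theorem oddBinomialSum_succ (n : ℕ) (x y : R) :
    oddBinomialSum (n + 1) x y = evenBinomialSum n x y + x * oddBinomialSum n x y := by
  rw [oddBinomialSum_eq_sum_range_succ n, oddBinomialSum, evenBinomialSum, mul_sum,
    ← sum_add_distrib]
  refine sum_congr rfl fun k _ => ?_
  rw [Nat.choose_succ_succ', Nat.cast_add, add_mul, add_mul,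
    ← choose_mul_pow_sub_mul n (2 * k + 1), Nat.add_sub_add_right]
  ring

theorem evenBinomialSum_succ (n : ℕ) (x y : R) :
    evenBinomialSum (n + 1) x y = x * evenBinomialSum n x y + y * oddBinomialSum n x y := by
  have hx : x * evenBinomialSum n x y = x ^ (n + 1) +
      ∑ k ∈ range (n + 1), (n.choose (2 * k + 2) : R) * x ^ (n - (2 * k + 1)) * y ^ (k + 1) := by
    have hterm : ∀ k, x * ((n.choose (2 * (k + 1)) : R) * x ^ (n - 2 * (k + 1)) * y ^ (k + 1)) =
        n.choose (2 * k + 2) * x ^ (n - (2 * k + 1)) * y ^ (k + 1) := fun k => by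
      rw [show n - (2 * k + 1) = n + 1 - (2 * k + 2) by omega, ← choose_mul_pow_sub_mul,
        show 2 * (k + 1) = 2 * k + 2 by ring]
      ring
    rw [evenBinomialSum, mul_sum, sum_range_succ', sum_range_succ (fun k => _ * _ * _) n,
      Nat.choose_eq_zero_of_lt (by omega : n < 2 * n + 2)]
    simp only [hterm, Nat.cast_zero, zero_mul, add_zero, mul_zero, Nat.choose_zero_right,
      Nat.cast_one, one_mul, Nat.sub_zero, pow_zero, mul_one]
    ring
  have hy : y * oddBinomialSum n x y =
      ∑ k ∈ range (n + 1), (n.choose (2 * k + 1) : R) * x ^ (n - (2 * k + 1)) * y ^ (k + 1) := by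
    simp only [oddBinomialSum_eq_sum_range_succ, mul_sum, pow_succ]
    exact sum_congr rfl fun k _ => by ring
  rw [hx, hy, evenBinomialSum, sum_range_succ']
  simp only [show ∀ k, 2 * (k + 1) = 2 * k + 1 + 1 by omega, Nat.choose_succ_succ', Nat.cast_add,
    add_mul, sum_add_distrib, Nat.add_sub_add_right, Nat.choose_zero_right, Nat.cast_one, one_mul,
    mul_zero, Nat.sub_zero, pow_zero, mul_one]
  ring

theorem oddBinomialSum_add_two (n : ℕ) (x y : R) :
    oddBinomialSum (n + 2) x y =
      2 * x * oddBinomialSum (n + 1) x y - (x ^ 2 - y) * oddBinomialSum n x y := by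
  linear_combination oddBinomialSum_succ (n + 1) x y + evenBinomialSum_succ n x y -
    x * oddBinomialSum_succ n x y

theorem oddBinomialSum_sq_sub_four (n : ℕ) (x : R) :
    oddBinomialSum (n + 1) x (x ^ 2 - 4) = 2 ^ n * (Chebyshev.S R n).eval x := by
  induction n using Nat.twoStepInduction with
  | zero => simp [oddBinomialSum]
  | one => simp [oddBinomialSum, sum_range_succ]
  | more n ih₀ ih₁ =>
    rw [oddBinomialSum_add_two, ih₀, ih₁]
    push_cast
    simp only [Chebyshev.S_add_two, eval_sub, eval_mul, eval_X]
    ring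

theorem sum_Icc_eq_oddBinomialSum (n : ℕ) (x y : R) :
    ∑ k ∈ Icc 1 ((n + 1) / 2), (n.choose (2 * k - 1) : R) * x ^ (n - (2 * k - 1)) * y ^ (k - 1) =
      oddBinomialSum n x y := by
  rw [← Ico_add_one_right_eq_Icc, sum_Ico_eq_sum_range, Nat.add_sub_cancel, oddBinomialSum]
  simp only [show ∀ k, 2 * (1 + k) - 1 = 2 * k + 1 by omega, Nat.add_sub_cancel_left]
  refine sum_subset (fun k hk => by simp only [mem_range] at hk ⊢; omega) fun k _ hk => ?_
  rw [Nat.choose_eq_zero_of_lt (by simp only [mem_range] at hk; omega)]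
  simp

end BinomialSums

section Tridiagonal

variable {R : Type*} [CommRing R]

def tridiag (a : R) (m : ℕ) : Matrix (Fin m) (Fin m) R :=
  Matrix.of fun i j =>
    if (i : ℕ) = j then a else if (i : ℕ) + 1 = j ∨ (j : ℕ) + 1 = i then -1 else 0

theorem tridiag_sub_smul_one (a c : R) (m : ℕ) :
    tridiag a m - c • (1 : Matrix (Fin m) (Fin m) R) = tridiag (a - c) m := by
  ext i j
  by_cases h : i = j
  · simp [tridiag, h]
  · simp [tridiag, h, Fin.val_ne_of_ne h]

theorem tridiag_mulVec_apply (a : R) {m : ℕ} (f : ℕ → R) (h₀ : f 0 = 0) (hm : f (m + 1) = 0)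
    (i : Fin m) :
    (tridiag a m *ᵥ fun k => f (k + 1)) i = a * f (i + 1) - f i - f (i + 2) := by
  set c : ℕ → R := fun v =>
    a * (if v = i + 1 then 1 else 0) - (if v = i then 1 else 0) - (if v = i + 2 then 1 else 0)
  calc (tridiag a m *ᵥ fun k => f (k + 1)) i
      = ∑ k ∈ range m, c (k + 1) * f (k + 1) := by
        rw [mulVec, dotProduct, ← Fin.sum_univ_eq_sum_range (fun k => c (k + 1) * f (k + 1))]
        refine sum_congr rfl fun k _ => ?_
        simp only [tridiag, of_apply, c]
        congr 1
        split_ifs <;> first | (exfalso; omega) | ring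
    _ = ∑ v ∈ range (m + 2), c v * f v := by
        rw [sum_range_succ, sum_range_succ', hm, h₀]
        ring
    _ = a * f (i + 1) - f i - f (i + 2) := by
        simp [c, sub_mul, sum_sub_distrib, ite_mul, show (i : ℕ) < m + 2 by omega]

theorem det_tridiag_add_two (a : R) (m : ℕ) :
    (tridiag a (m + 2)).det = a * (tridiag a (m + 1)).det - (tridiag a m).det := by
  have hminor₀ : (tridiag a (m + 2)).submatrix Fin.succ Fin.succ = tridiag a (m + 1) := by
    ext i j
    simp [tridiag]
  set B := (tridiag a (m + 2)).submatrix Fin.succ (Fin.succAbove 1)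
  have hminor₁ : B.submatrix (Fin.succAbove 0) Fin.succ = tridiag a m := by
    ext i j
    simp [B, tridiag, Fin.succAbove]
  have hB : B.det = -(tridiag a m).det := by
    rw [det_succ_column_zero, Fin.sum_univ_succ, ← hminor₁]
    simp [B, tridiag, Fin.succAbove]
  rw [det_succ_row_zero, Fin.sum_univ_succ, Fin.sum_univ_succ, Fin.succAbove_zero, hminor₀,
    Fin.succ_zero_eq_one, hB]
  simp [tridiag, sub_eq_add_neg]

theorem det_tridiag (a : R) (m : ℕ) : (tridiag a m).det = (Chebyshev.S R m).eval a := by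
  induction m using Nat.twoStepInduction with
  | zero => simp
  | one => simp [tridiag]
  | more m ih₀ ih₁ =>
    rw [det_tridiag_add_two, ih₀, ih₁]
    push_cast
    simp [Chebyshev.S_add_two]

end Tridiagonal

theorem two_mul_min_sub_min_sub_min {R : Type*} [CommRing R] (i c : ℕ) :
    2 * ((min (i + 1) c : ℕ) : R) - (min i c : ℕ) - (min (i + 2) c : ℕ) =
      if i + 1 = c then 1 else 0 := by
  rcases lt_trichotomy (i + 1) c with h | rfl | h
  · rw [min_eq_left h.le, min_eq_left (by omega), min_eq_left h, if_neg h.ne]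
    push_cast; ring
  · rw [min_self, min_eq_left (by omega), min_eq_right (by omega), if_pos rfl]
    push_cast; ring
  · rw [min_eq_right h.le, min_eq_right (by omega), min_eq_right (by omega), if_neg h.ne']
    ring

theorem tridiag_two_mul_Kmat {n : ℕ} (hn : n ≠ 0) :
    tridiag 2 (n - 1) * Kmat n = (n : ℝ)⁻¹ • 1 := by
  ext i j
  set g : ℕ → ℝ := fun v => ((min v (j + 1) : ℕ) : ℝ) / n - (v : ℝ) * ((j + 1 : ℕ) : ℝ) / n ^ 2
  have hg₀ : g 0 = 0 := by
    simp only [g, Nat.zero_min, Nat.cast_zero, zero_div, zero_mul, sub_zero]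
  have hgn : g (n - 1 + 1) = 0 := by
    rw [Nat.sub_add_cancel (Nat.one_le_iff_ne_zero.mpr hn)]
    simp only [g, min_eq_right (by omega : j.1 + 1 ≤ n)]
    field_simp
    ring
  have hcol : (tridiag (2 : ℝ) (n - 1) * Kmat n) i j =
      (tridiag 2 (n - 1) *ᵥ fun k => g (k + 1)) i := rfl
  rw [hcol, tridiag_mulVec_apply 2 g hg₀ hgn, Matrix.smul_apply, one_apply]
  calc 2 * g (i + 1) - g i - g (i + 2)
      = (2 * ((min (i.1 + 1) (j + 1) : ℕ) : ℝ) - (min i.1 (j + 1) : ℕ)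
          - (min (i.1 + 2) (j + 1) : ℕ)) / n := by
        simp only [g]
        push_cast
        ring
    _ = _ := by
        rw [two_mul_min_sub_min_sub_min]
        simp [Fin.ext_iff, ite_div]

theorem dpoly_eq_eval_S {n : ℕ} (hn : n ≠ 0) (lam : ℝ) :
    dpoly n lam = (Chebyshev.S ℝ (n - 1 : ℕ)).eval (2 - lam / n) / n := by
  have hT : (tridiag (2 : ℝ) (n - 1)).det = n := by
    rw [det_tridiag, Chebyshev.S_eval_two]
    norm_cast
    omega
  have hprod : tridiag 2 (n - 1) * (1 - lam • Kmat n) = tridiag (2 - lam / n) (n - 1) := by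
    rw [mul_sub, mul_one, Matrix.mul_smul, tridiag_two_mul_Kmat hn, smul_smul,
      ← tridiag_sub_smul_one, div_eq_mul_inv]
  have hdet := congrArg det hprod
  rw [det_mul, hT, det_tridiag] at hdet
  rw [eq_div_iff (Nat.cast_ne_zero.mpr hn), mul_comm, dpoly, hdet]

/-- Explicit formula for the alternative characteristic polynomial `d_n`. -/
theorem dpoly_explicit_formula (n : ℕ) (hn : 2 ≤ n) (lam : ℝ) :
    dpoly n lam
      = ((-1 : ℝ) ^ (n - 1) / ((n : ℝ) * 2 ^ (n - 1))) *
          ∑ k ∈ Finset.Icc 1 ((n + 1) / 2),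
            (n.choose (2 * k - 1) : ℝ) * (lam / n - 2) ^ (n - (2 * k - 1)) *
              ((lam / n - 2) ^ 2 - 4) ^ (k - 1) := by
  obtain ⟨m, rfl⟩ : ∃ m, n = m + 1 := ⟨n - 1, by omega⟩
  rw [dpoly_eq_eval_S m.add_one_ne_zero, sum_Icc_eq_oddBinomialSum, Nat.add_sub_cancel,
    oddBinomialSum_sq_sub_four, show 2 - lam / ↑(m + 1) = -(lam / ↑(m + 1) - 2) by ring,
    Chebyshev.S_eval_neg]
  field_simp

end
end

section
/- For every integer n ≥ 2 and every integer m ≥ 1, the m-th moment of the empirical correlation satisfies E[θ_n^m] = ((−1)^m / (2^m · Γ(m/2)²)) · ∫₀^∞ ∫₀^∞ s11^{m/2 − 1} · s22^{m/2 − 1} · g_m(s11, s22) ds11 ds22, where g_m(s11, s22) denotes the m-th derivative of the function s12 ↦ φ_n(s11, s12, s22) evaluated at s12 = 0. -/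
open MeasureTheory ProbabilityTheory Finset

noncomputable section

/-- Partial sum `x_1 + ⋯ + x_i`. -/
def psum (x : ℕ → ℝ) (i : ℕ) : ℝ := ∑ j ∈ Finset.Icc 1 i, x j

/-- The empirical covariance of the partial-sum sequences of `x` and `y` built from
their first `n` terms: `(1/n) Σ S_i T_i − (1/n²) (Σ S_i)(Σ T_i)`. -/
def Zbil (n : ℕ) (x y : ℕ → ℝ) : ℝ :=
  (1 / (n : ℝ)) * ∑ i ∈ Finset.Icc 1 n, psum x i * psum y i
    - (1 / (n : ℝ) ^ 2) * (∑ i ∈ Finset.Icc 1 n, psum x i) *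
        (∑ i ∈ Finset.Icc 1 n, psum y i)

variable {Ω : Type*} [MeasurableSpace Ω]

/-- The joint moment generating function
`φ_n(s11, s12, s22) = E[exp(−(1/2)(s11 Z11 + 2 s12 Z12 + s22 Z22))]`. -/
def phiN (μ : Measure Ω) (X Y : ℕ → Ω → ℝ) (n : ℕ) (s11 s12 s22 : ℝ) : ℝ :=
  ∫ ω, Real.exp (-(1 / 2) *
      (s11 * Zbil n (fun i => X i ω) (fun i => X i ω)
        + 2 * s12 * Zbil n (fun i => X i ω) (fun i => Y i ω)
        + s22 * Zbil n (fun i => Y i ω) (fun i => Y i ω))) ∂μ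

/-- The empirical correlation `θ_n` of the two random walks. -/
def thetaN (X Y : ℕ → Ω → ℝ) (n : ℕ) (ω : Ω) : ℝ :=
  Zbil n (fun i => X i ω) (fun i => Y i ω) /
    Real.sqrt (Zbil n (fun i => X i ω) (fun i => X i ω) *
      Zbil n (fun i => Y i ω) (fun i => Y i ω))

/-! With `c = m / 2`, the Gamma integral `∫₀^∞ t^(c-1) e^(-a t / 2) dt = (2 / a)^c Γ(c)` writes
`2^m Γ(c)² θ_n^m` as the integral over `s11, s22 > 0` of
`s11^(c-1) s22^(c-1) (2 Z12)^m e^(-(s11 Z11 + s22 Z22) / 2)`, and `(-Z12)^m e^(-(s11 Z11 + s22 Z22) / 2)`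
is what `m` derivatives in `s12` at `0` produce from the integrand of `φ_n`. Taking expectations
and exchanging the integrals gives the formula. Both exchanges rest on Cauchy–Schwarz,
`Z12² ≤ Z11 Z22`: the exponent stays `≤ 0` for `s12² ≤ s11 s22`, and `|θ_n| ≤ 1`.
Moreover `Z11 > 0` almost surely, since `Z11 = 0` forces `X_2 = S_2 - S_1 = 0`. -/

lemma Zbil_eq_centered (n : ℕ) (x y : ℕ → ℝ) :
    Zbil n x y = (1 / (n : ℝ)) * ∑ i ∈ Icc 1 n,
      (psum x i - (∑ j ∈ Icc 1 n, psum x j) / n) *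
        (psum y i - (∑ j ∈ Icc 1 n, psum y j) / n) := by
  rcases eq_or_ne n 0 with rfl | hn
  · simp [Zbil]
  have hcard : ((Icc 1 n).card : ℝ) = n := by simp
  simp only [sub_mul, mul_sub, sum_sub_distrib, ← sum_mul, ← mul_sum, sum_const, hcard,
    nsmul_eq_mul, Zbil]
  field_simp
  ring

lemma Zbil_self_nonneg (n : ℕ) (x : ℕ → ℝ) : 0 ≤ Zbil n x x := by
  rw [Zbil_eq_centered]
  exact mul_nonneg (by positivity) (sum_nonneg fun i _ => mul_self_nonneg _)

lemma Zbil_sq_le (n : ℕ) (x y : ℕ → ℝ) : Zbil n x y ^ 2 ≤ Zbil n x x * Zbil n y y := by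
  simp only [Zbil_eq_centered, mul_pow, ← sq]
  rw [mul_mul_mul_comm, ← sq]
  exact mul_le_mul_of_nonneg_left (sum_mul_sq_le_sq_mul_sq _ _ _) (by positivity)

lemma Zbil_self_pos {n : ℕ} (hn : 2 ≤ n) {x : ℕ → ℝ} (hx : x 2 ≠ 0) : 0 < Zbil n x x := by
  refine (Zbil_self_nonneg n x).lt_of_ne fun h => hx ?_
  set c := (∑ j ∈ Icc 1 n, psum x j) / n
  have hc : ∀ i ∈ Icc 1 n, psum x i = c := by
    rw [Zbil_eq_centered, eq_comm, mul_eq_zero, sum_eq_zero_iff_of_nonneg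
      fun i _ => mul_self_nonneg _] at h
    rcases h with h | h
    · simp at h; omega
    · exact fun i hi => sub_eq_zero.mp (mul_self_eq_zero.mp (h i hi))
  have hpsum_two : psum x 2 = psum x 1 + x 2 := by simp [psum, sum_Icc_succ_top]
  linarith [hc 1 (mem_Icc.mpr ⟨le_rfl, by omega⟩), hc 2 (mem_Icc.mpr ⟨by omega, hn⟩)]

lemma measurable_Zbil (n : ℕ) {X Y : ℕ → Ω → ℝ} (hX : ∀ i, Measurable (X i))
    (hY : ∀ i, Measurable (Y i)) :
    Measurable fun ω => Zbil n (fun i => X i ω) (fun i => Y i ω) := by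
  simp only [Zbil, psum]
  fun_prop

lemma ae_ne_of_map_eq_gaussianReal {μ : Measure Ω} {W : Ω → ℝ} (hW : Measurable W)
    {m : ℝ} {v : NNReal} (hv : v ≠ 0) (h : μ.map W = gaussianReal m v) (a : ℝ) :
    ∀ᵐ ω ∂μ, W ω ≠ a := by
  have := nullSingletonClass_gaussianReal (μ := m) hv
  exact ae_of_ae_map hW.aemeasurable (by rw [h]; exact Measure.ae_ne _ a)

open Real

def gammaWeight (c a t : ℝ) : ℝ := t ^ (c - 1) * exp (-(a / 2 * t))

lemma integral_gammaWeight {c a : ℝ} (hc : 0 < c) (ha : 0 < a) :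
    ∫ t in Set.Ioi 0, gammaWeight c a t = (2 / a) ^ c * Gamma c := by
  simp only [gammaWeight]
  rw [integral_rpow_mul_exp_neg_mul_Ioi hc (by positivity), one_div_div]

lemma integral_norm_gammaWeight {c a : ℝ} (hc : 0 < c) (ha : 0 < a) :
    ∫ t in Set.Ioi 0, ‖gammaWeight c a t‖ = (2 / a) ^ c * Gamma c := by
  rw [← integral_gammaWeight hc ha]
  refine setIntegral_congr_fun measurableSet_Ioi fun t (ht : 0 < t) => ?_
  exact Real.norm_of_nonneg (by unfold gammaWeight; positivity)

lemma integrableOn_gammaWeight {c a : ℝ} (hc : 0 < c) (ha : 0 < a) :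
    IntegrableOn (gammaWeight c a) (Set.Ioi 0) := by
  show IntegrableOn (fun t => t ^ (c - 1) * exp (-(a / 2 * t))) _
  simpa [neg_mul] using
    integrableOn_rpow_mul_exp_neg_mul_rpow (by linarith : -1 < c - 1) one_pos (half_pos ha)

lemma two_div_rpow_mul_two_div_rpow {a b : ℝ} (ha : 0 < a) (hb : 0 < b) (m : ℕ) :
    (2 / a) ^ ((m : ℝ) / 2) * (2 / b) ^ ((m : ℝ) / 2) = (2 / √(a * b)) ^ m := by
  rw [← mul_rpow (by positivity) (by positivity), div_mul_div_comm,
    show (2 : ℝ) * 2 / (a * b) = (2 / √(a * b)) ^ 2 by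
      rw [div_pow, sq_sqrt (by positivity)]; norm_num,
    ← rpow_natCast, ← rpow_mul (by positivity),
    show ((2 : ℕ) : ℝ) * (m / 2) = m by push_cast; ring, rpow_natCast]

lemma quadratic_pairing_nonneg {a b c s t u : ℝ} (ha : 0 ≤ a) (hb : 0 ≤ b) (hs : 0 ≤ s)
    (hu : 0 ≤ u) (hc : c ^ 2 ≤ a * b) (ht : t ^ 2 ≤ s * u) : 0 ≤ s * a + 2 * t * c + u * b := by
  by_contra! h
  have h1 : (t * c) ^ 2 ≤ (s * a) * (u * b) := by
    rw [mul_pow]; nlinarith [mul_le_mul ht hc (sq_nonneg c) (by positivity)]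
  nlinarith [sq_nonneg (s * a - u * b), mul_nonneg hs ha, mul_nonneg hu hb]

section LaplaceTransform

variable {μ : Measure Ω} {A B C : Ω → ℝ}

lemma iteratedDeriv_integral_exp_zero [IsFiniteMeasure μ] (hAm : Measurable A)
    (hBm : Measurable B) (hCm : Measurable C) (hA : ∀ ω, 0 ≤ A ω) (hB : ∀ ω, 0 ≤ B ω)
    (hC : ∀ ω, C ω ^ 2 ≤ A ω * B ω) {s u : ℝ} (hs : 0 < s) (hu : 0 < u) (m : ℕ) :
    iteratedDeriv m (fun t => ∫ ω, exp (-(1 / 2) * (s * A ω + 2 * t * C ω + u * B ω)) ∂μ) 0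
      = ∫ ω, (-C ω) ^ m * exp (-(1 / 2) * (s * A ω + u * B ω)) ∂μ := by
  -- the weight `exp (-(s A + u B) / 2)` turns the integral into a moment generating function
  set w : Ω → NNReal := fun ω => (exp (-(1 / 2) * (s * A ω + u * B ω))).toNNReal
  have hw : Measurable w := by fun_prop
  have hw_coe : ∀ ω, (w ω : ℝ) = exp (-(1 / 2) * (s * A ω + u * B ω)) :=
    fun ω => Real.coe_toNNReal _ (exp_pos _).le
  have hmgf : (fun t => ∫ ω, exp (-(1 / 2) * (s * A ω + 2 * t * C ω + u * B ω)) ∂μ)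
      = mgf (fun ω => -C ω) (μ.withDensity fun ω => w ω) := by
    ext t
    rw [mgf, integral_withDensity_eq_integral_smul hw]
    congr with ω
    rw [NNReal.smul_def, hw_coe, smul_eq_mul, ← exp_add]
    ring_nf
  have hint : (0 : ℝ) ∈ interior (integrableExpSet (fun ω => -C ω)
      (μ.withDensity fun ω => w ω)) := by
    refine mem_interior_iff_mem_nhds.mpr (Filter.mem_of_superset
      (Ioo_mem_nhds (neg_neg_of_pos (sqrt_pos.mpr (mul_pos hs hu))) (sqrt_pos.mpr (mul_pos hs hu)))
      fun t ht => ?_)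
    have ht2 : t ^ 2 ≤ s * u := by
      rw [← sq_sqrt (mul_pos hs hu).le, sq_le_sq, abs_of_pos (sqrt_pos.mpr (mul_pos hs hu))]
      exact (abs_lt.mpr ht).le
    show Integrable _ _
    rw [integrable_withDensity_iff_integrable_smul hw]
    refine (integrable_const 1).mono' (by fun_prop) (Filter.Eventually.of_forall fun ω => ?_)
    rw [NNReal.smul_def, hw_coe, smul_eq_mul, ← exp_add, norm_of_nonneg (exp_pos _).le,
      exp_le_one_iff]
    nlinarith [quadratic_pairing_nonneg (hA ω) (hB ω) hs.le hu.le (hC ω) ht2]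
  rw [hmgf, iteratedDeriv_mgf_zero hint, integral_withDensity_eq_integral_smul hw]
  congr with ω
  rw [NNReal.smul_def, hw_coe, smul_eq_mul, mul_comm]
  rfl

end LaplaceTransform

def momentKernel (m : ℕ) (a b k : ℝ) (p : ℝ × ℝ) : ℝ :=
  k ^ m * (gammaWeight (m / 2) a p.1 * gammaWeight (m / 2) b p.2)

section MomentKernel

variable {m : ℕ} {a b : ℝ}

lemma integrable_momentKernel (hm : 1 ≤ m) (ha : 0 < a) (hb : 0 < b) (k : ℝ) :
    Integrable (momentKernel m a b k)
      ((volume.restrict (Set.Ioi 0)).prod (volume.restrict (Set.Ioi 0))) := by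
  have hc : (0 : ℝ) < m / 2 := by positivity
  exact ((integrableOn_gammaWeight hc ha).mul_prod (integrableOn_gammaWeight hc hb)).const_mul _

lemma integral_momentKernel (hm : 1 ≤ m) (ha : 0 < a) (hb : 0 < b) (k : ℝ) :
    ∫ p, momentKernel m a b k p ∂(volume.restrict (Set.Ioi 0)).prod (volume.restrict (Set.Ioi 0))
      = (2 * k / √(a * b)) ^ m * Gamma (m / 2) ^ 2 := by
  have hc : (0 : ℝ) < m / 2 := by positivity
  simp only [momentKernel]
  rw [integral_const_mul, integral_prod_mul (fun t => gammaWeight (m / 2) a t)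
    (fun t => gammaWeight (m / 2) b t), integral_gammaWeight hc ha, integral_gammaWeight hc hb,
    mul_mul_mul_comm, two_div_rpow_mul_two_div_rpow ha hb]
  ring

lemma integral_norm_momentKernel_le (hm : 1 ≤ m) (ha : 0 < a) (hb : 0 < b) {k : ℝ}
    (hk : k ^ 2 ≤ a * b) :
    ∫ p, ‖momentKernel m a b k p‖
        ∂(volume.restrict (Set.Ioi 0)).prod (volume.restrict (Set.Ioi 0))
      ≤ 2 ^ m * Gamma (m / 2) ^ 2 := by
  have hc : (0 : ℝ) < m / 2 := by positivity
  simp only [momentKernel, norm_mul, norm_pow]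
  rw [integral_const_mul, integral_prod_mul (fun t => ‖gammaWeight (m / 2) a t‖)
    (fun t => ‖gammaWeight (m / 2) b t‖), integral_norm_gammaWeight hc ha,
    integral_norm_gammaWeight hc hb, mul_mul_mul_comm, two_div_rpow_mul_two_div_rpow ha hb,
    ← mul_assoc, ← mul_pow, ← sq]
  have hab : 0 < √(a * b) := sqrt_pos.mpr (mul_pos ha hb)
  gcongr
  calc ‖k‖ * (2 / √(a * b)) ≤ √(a * b) * (2 / √(a * b)) := by gcongr; exact abs_le_sqrt hk
    _ = 2 := by field_simp

end MomentKernel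

section Representation

variable {μ : Measure Ω} {A B C : Ω → ℝ}

lemma integrable_momentKernel_prod [IsFiniteMeasure μ] (hAm : Measurable A)
    (hBm : Measurable B) (hCm : Measurable C) (hC : ∀ ω, C ω ^ 2 ≤ A ω * B ω)
    (hpos : ∀ᵐ ω ∂μ, 0 < A ω ∧ 0 < B ω) {m : ℕ} (hm : 1 ≤ m) :
    Integrable (fun q : Ω × (ℝ × ℝ) => momentKernel m (A q.1) (B q.1) (-C q.1) q.2)
      (μ.prod ((volume.restrict (Set.Ioi 0)).prod (volume.restrict (Set.Ioi 0)))) := by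
  have hmeas : AEStronglyMeasurable
      (fun q : Ω × (ℝ × ℝ) => momentKernel m (A q.1) (B q.1) (-C q.1) q.2)
      (μ.prod ((volume.restrict (Set.Ioi 0)).prod (volume.restrict (Set.Ioi 0)))) := by
    unfold momentKernel gammaWeight
    fun_prop
  rw [integrable_prod_iff hmeas]
  refine ⟨?_, (integrable_const (2 ^ m * Gamma (m / 2) ^ 2)).mono'
    hmeas.norm.integral_prod_right' ?_⟩
  · filter_upwards [hpos] with ω h using integrable_momentKernel hm h.1 h.2 _
  · filter_upwards [hpos] with ω h
    rw [norm_of_nonneg (integral_nonneg fun _ => norm_nonneg _)]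
    exact integral_norm_momentKernel_le hm h.1 h.2 (by rw [neg_sq]; exact hC ω)

lemma integral_momentKernel_eq_iteratedDeriv [IsFiniteMeasure μ] (hAm : Measurable A)
    (hBm : Measurable B) (hCm : Measurable C) (hA : ∀ ω, 0 ≤ A ω) (hB : ∀ ω, 0 ≤ B ω)
    (hC : ∀ ω, C ω ^ 2 ≤ A ω * B ω) (m : ℕ) {s u : ℝ} (hs : 0 < s) (hu : 0 < u) :
    ∫ ω, momentKernel m (A ω) (B ω) (-C ω) (s, u) ∂μ
      = s ^ ((m : ℝ) / 2 - 1) * u ^ ((m : ℝ) / 2 - 1) *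
          iteratedDeriv m (fun t =>
            ∫ ω, exp (-(1 / 2) * (s * A ω + 2 * t * C ω + u * B ω)) ∂μ) 0 := by
  rw [iteratedDeriv_integral_exp_zero hAm hBm hCm hA hB hC hs hu, ← integral_const_mul]
  congr with ω
  simp only [momentKernel, gammaWeight]
  rw [show -(1 / 2) * (s * A ω + u * B ω) = -(A ω / 2 * s) + -(B ω / 2 * u) by ring, exp_add]
  ring

theorem integral_div_sqrt_pow_eq [IsFiniteMeasure μ] (hAm : Measurable A)
    (hBm : Measurable B) (hCm : Measurable C) (hA : ∀ ω, 0 ≤ A ω) (hB : ∀ ω, 0 ≤ B ω)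
    (hC : ∀ ω, C ω ^ 2 ≤ A ω * B ω) (hpos : ∀ᵐ ω ∂μ, 0 < A ω ∧ 0 < B ω) {m : ℕ} (hm : 1 ≤ m) :
    ∫ ω, (C ω / √(A ω * B ω)) ^ m ∂μ
      = ((-1 : ℝ) ^ m / (2 ^ m * Gamma ((m : ℝ) / 2) ^ 2)) *
          ∫ s in Set.Ioi (0 : ℝ), ∫ u in Set.Ioi (0 : ℝ),
            s ^ ((m : ℝ) / 2 - 1) * u ^ ((m : ℝ) / 2 - 1) *
              iteratedDeriv m (fun t =>
                ∫ ω, exp (-(1 / 2) * (s * A ω + 2 * t * C ω + u * B ω)) ∂μ) 0 := by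
  have hK := integrable_momentKernel_prod hAm hBm hCm hC hpos hm
  have hΓ : Gamma ((m : ℝ) / 2) ≠ 0 := (Gamma_pos_of_pos (by positivity)).ne'
  calc ∫ ω, (C ω / √(A ω * B ω)) ^ m ∂μ
      = ∫ ω, (-1 : ℝ) ^ m / (2 ^ m * Gamma ((m : ℝ) / 2) ^ 2) *
          ∫ p, momentKernel m (A ω) (B ω) (-C ω) p
            ∂(volume.restrict (Set.Ioi 0)).prod (volume.restrict (Set.Ioi 0)) ∂μ := by
        refine integral_congr_ae ?_
        filter_upwards [hpos] with ω h
        rw [integral_momentKernel hm h.1 h.2,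
          show 2 * -C ω / √(A ω * B ω) = -1 * 2 * (C ω / √(A ω * B ω)) by ring, mul_pow,
          mul_pow]
        field_simp
        rw [← pow_mul, mul_comm m 2, pow_mul, neg_one_sq, one_pow, mul_one]
    _ = (-1 : ℝ) ^ m / (2 ^ m * Gamma ((m : ℝ) / 2) ^ 2) *
          ∫ p, ∫ ω, momentKernel m (A ω) (B ω) (-C ω) p ∂μ
            ∂(volume.restrict (Set.Ioi 0)).prod (volume.restrict (Set.Ioi 0)) := by
        rw [integral_const_mul, integral_integral_swap hK]
    _ = _ := by
        rw [integral_prod _ hK.integral_prod_right]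
        refine congrArg _ (setIntegral_congr_fun measurableSet_Ioi fun s hs => ?_)
        refine setIntegral_congr_fun measurableSet_Ioi fun u hu => ?_
        exact integral_momentKernel_eq_iteratedDeriv hAm hBm hCm hA hB hC m hs hu

end Representation

theorem moment_formula_general (μ : Measure Ω) [IsProbabilityMeasure μ] (X Y : ℕ → Ω → ℝ)
    (hXm : ∀ i, Measurable (X i)) (hYm : ∀ i, Measurable (Y i))
    (hX : ∀ i, Measure.map (X i) μ = gaussianReal 0 1)
    (hY : ∀ i, Measure.map (Y i) μ = gaussianReal 0 1)
    (n : ℕ) (hn : 2 ≤ n) (m : ℕ) (hm : 1 ≤ m) :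
    ∫ ω, (thetaN X Y n ω) ^ m ∂μ
      = ((-1 : ℝ) ^ m / (2 ^ m * Real.Gamma ((m : ℝ) / 2) ^ 2)) *
          ∫ s11 in Set.Ioi (0 : ℝ), ∫ s22 in Set.Ioi (0 : ℝ),
            s11 ^ ((m : ℝ) / 2 - 1) * s22 ^ ((m : ℝ) / 2 - 1) *
              iteratedDeriv m (fun s12 => phiN μ X Y n s11 s12 s22) 0 := by
  have hpos : ∀ᵐ ω ∂μ, 0 < Zbil n (fun i => X i ω) (fun i => X i ω)
      ∧ 0 < Zbil n (fun i => Y i ω) (fun i => Y i ω) := by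
    filter_upwards [ae_ne_of_map_eq_gaussianReal (hXm 2) one_ne_zero (hX 2) 0,
      ae_ne_of_map_eq_gaussianReal (hYm 2) one_ne_zero (hY 2) 0] with ω hx hy
    exact ⟨Zbil_self_pos hn hx, Zbil_self_pos hn hy⟩
  exact integral_div_sqrt_pow_eq (measurable_Zbil n hXm hXm) (measurable_Zbil n hYm hYm)
    (measurable_Zbil n hXm hYm) (fun _ => Zbil_self_nonneg n _) (fun _ => Zbil_self_nonneg n _)
    (fun _ => Zbil_sq_le n _ _) hpos hm

/-- Proposition 1 of Ernst et al. (2019): integro-differential representation of the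
`m`-th moment of the empirical correlation `θ_n`. -/
theorem moment_formula (μ : Measure Ω) [IsProbabilityMeasure μ] (X Y : ℕ → Ω → ℝ)
    (hXm : ∀ i, Measurable (X i)) (hYm : ∀ i, Measurable (Y i))
    (hindep : iIndepFun (Sum.elim X Y) μ)
    (hX : ∀ i, Measure.map (X i) μ = gaussianReal 0 1)
    (hY : ∀ i, Measure.map (Y i) μ = gaussianReal 0 1)
    (n : ℕ) (hn : 2 ≤ n) (m : ℕ) (hm : 1 ≤ m) :
    ∫ ω, (thetaN X Y n ω) ^ m ∂μ
      = ((-1 : ℝ) ^ m / (2 ^ m * Real.Gamma ((m : ℝ) / 2) ^ 2)) *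
          ∫ s11 in Set.Ioi (0 : ℝ), ∫ s22 in Set.Ioi (0 : ℝ),
            s11 ^ ((m : ℝ) / 2 - 1) * s22 ^ ((m : ℝ) / 2 - 1) *
              iteratedDeriv m (fun s12 => phiN μ X Y n s11 s12 s22) 0 :=
  moment_formula_general μ X Y hXm hYm hX hY n hn m hm

end
end

section
/- Let X be a real random variable on a probability space with X > 0 almost surely, and let m ≥ 1 be an integer. Then E[X^{−m}] = (1/(m−1)!) · ∫₀^∞ s^{m−1} · E[e^{−s·X}] ds, as an identity in [0, ∞]. -/
open MeasureTheory

/-! Since `∫₀^∞ s^k e^{-s x} ds = k! / x^(k+1)` for `x > 0` (a Gamma integral), integrating over `ω`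
and exchanging the two integrals by Tonelli gives the identity. For `s > 0` the variable
`e^{-sX}` is bounded, so its Bochner expectation agrees with its lower integral. -/

open Set Real
open scoped Nat

theorem integral_pow_mul_exp_neg_mul_Ioi {b : ℝ} (hb : 0 < b) (k : ℕ) :
    ∫ s in Ioi (0 : ℝ), s ^ k * exp (-s * b) = k ! / b ^ (k + 1) := by
  have h := integral_rpow_mul_exp_neg_mul_Ioi (a := k + 1) (by positivity) hb
  rw [add_sub_cancel_right, Gamma_nat_eq_factorial, ← Nat.cast_succ] at h
  simp only [rpow_natCast, one_div, inv_pow] at h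
  rw [div_eq_inv_mul, ← h]
  refine setIntegral_congr_fun measurableSet_Ioi fun s _ => ?_
  ring_nf

theorem lintegral_pow_mul_exp_neg_mul_Ioi {b : ℝ} (hb : 0 < b) (k : ℕ) :
    ∫⁻ s in Ioi (0 : ℝ), ENNReal.ofReal (s ^ k * exp (-s * b)) =
      ENNReal.ofReal (k ! / b ^ (k + 1)) := by
  have hval := integral_pow_mul_exp_neg_mul_Ioi hb k
  have hint : IntegrableOn (fun s : ℝ => s ^ k * exp (-s * b)) (Ioi 0) :=
    .of_integral_ne_zero (by rw [hval]; positivity)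
  rw [← hval, ofReal_integral_eq_lintegral_ofReal hint]
  filter_upwards [ae_restrict_mem measurableSet_Ioi] with s (hs : 0 < s)
  positivity

theorem integrable_exp_neg_mul {Ω : Type*} [MeasurableSpace Ω] {μ : Measure Ω}
    [IsFiniteMeasure μ] {X : Ω → ℝ} (hX : AEMeasurable X μ) (hXnn : ∀ᵐ ω ∂μ, 0 ≤ X ω)
    {s : ℝ} (hs : 0 ≤ s) :
    Integrable (fun ω => exp (-s * X ω)) μ := by
  refine .of_bound (by fun_prop) 1 ?_
  filter_upwards [hXnn] with ω hω
  rw [norm_of_nonneg (exp_pos _).le, exp_le_one_iff]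
  nlinarith

theorem lintegral_inv_pow_succ_eq_setLIntegral_pow_mul_exp {Ω : Type*} [MeasurableSpace Ω]
    {μ : Measure Ω} [SFinite μ] {X : Ω → ℝ} (hX : Measurable X) (hXpos : ∀ᵐ ω ∂μ, 0 < X ω)
    (k : ℕ) :
    ∫⁻ ω, ENNReal.ofReal ((X ω ^ (k + 1))⁻¹) ∂μ = ENNReal.ofReal (1 / k !) *
      ∫⁻ s in Ioi (0 : ℝ), ∫⁻ ω, ENNReal.ofReal (s ^ k * exp (-s * X ω)) ∂μ := by
  rw [lintegral_lintegral_swap (by fun_prop), ← lintegral_const_mul' _ _ ENNReal.ofReal_ne_top]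
  refine lintegral_congr_ae ?_
  filter_upwards [hXpos] with ω hω
  rw [lintegral_pow_mul_exp_neg_mul_Ioi hω, ← ENNReal.ofReal_mul (by positivity)]
  congr 1
  field_simp

/-- For a random variable `X > 0` a.s. and an integer `m ≥ 1`,
`E[X^{−m}] = (1/(m−1)!) ∫₀^∞ s^{m−1} E[e^{−sX}] ds`, as an identity in `[0,∞]`. -/
theorem neg_moment_eq_integral_mgf {Ω : Type*} [MeasurableSpace Ω]
    (μ : Measure Ω) [IsProbabilityMeasure μ] (X : Ω → ℝ) (hXm : Measurable X)
    (hXpos : ∀ᵐ ω ∂μ, 0 < X ω) (m : ℕ) (hm : 1 ≤ m) :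
    (∫⁻ ω, ENNReal.ofReal ((X ω ^ m)⁻¹) ∂μ)
      = ENNReal.ofReal (1 / (Nat.factorial (m - 1) : ℝ)) *
          ∫⁻ s in Set.Ioi (0 : ℝ),
            ENNReal.ofReal (s ^ (m - 1) * ∫ ω, Real.exp (-s * X ω) ∂μ) := by
  obtain ⟨k, rfl⟩ := Nat.exists_eq_add_of_le' hm
  rw [Nat.add_sub_cancel, lintegral_inv_pow_succ_eq_setLIntegral_pow_mul_exp hXm hXpos]
  congr 1
  refine setLIntegral_congr_fun measurableSet_Ioi fun s (hs : 0 < s) => ?_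
  have hint := integrable_exp_neg_mul hXm.aemeasurable (hXpos.mono fun _ h => h.le) hs.le
  rw [← integral_const_mul, ofReal_integral_eq_lintegral_ofReal (hint.const_mul _)]
  exact .of_forall fun ω => by positivity
end

section
/- For every integer n ≥ 11 and every real s ≥ 0, d_n(−2s/n) ≥ 2⁵ · C(n, 11) · n^{−11} · s⁵, where C(n,11) is the binomial coefficient n choose 11. -/
/-!
The matrix `K_n` is the Green's function of the discrete Dirichlet Laplacian, so its inverse is
the tridiagonal matrix `tridiag(2n, -n)` and `n^n d_n(λ) = det tridiag(2n - λ, -n)`.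
For `λ = -2s/n` the diagonal splits as `u + v` with `uv = n^2`, namely `u, v = c ± t` where
`c = n + s/n` and `t^2 = 2s + s^2/n^2`; the determinant is then `(u^n - v^n)/(u - v)`.
In the binomial expansion of `(c + t)^n - (c - t)^n` every term is nonnegative; keeping only the
one with `t^11`, together with `c ≥ n` and `t^2 ≥ 2s`, gives the bound.
-/

open Finset

noncomputable section

namespace Matrix

variable {R : Type*}

def tridiag [Zero R] (m : ℕ) (d e : R) : Matrix (Fin m) (Fin m) R := fun i j =>
  if i = j then d else if (i : ℕ) + 1 = j ∨ (j : ℕ) + 1 = i then e else 0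

variable [CommRing R]

theorem tridiag_submatrix_succ (m : ℕ) (d e : R) :
    (tridiag (m + 1) d e).submatrix Fin.succ Fin.succ = tridiag m d e := by
  ext i j
  simp [tridiag, Fin.ext_iff]

theorem det_tridiag_minor_zero_one (m : ℕ) (d e : R) :
    ((tridiag (m + 2) d e).submatrix Fin.succ (Fin.succAbove 1)).det
      = e * (tridiag m d e).det := by
  rw [det_succ_column_zero, Fin.sum_univ_succ, Finset.sum_eq_zero]
  · have : (tridiag (m + 2) d e).submatrix (Fin.succ ∘ Fin.succ) (Fin.succAbove 1 ∘ Fin.succ)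
        = tridiag m d e := by
      ext i j
      simp [tridiag, Fin.ext_iff, Fin.succAbove]
    simp [this, tridiag, Fin.succAbove]
  · intro i _
    simp [tridiag, Fin.ext_iff, Fin.succAbove]

theorem det_tridiag_succ_succ (m : ℕ) (d e : R) :
    (tridiag (m + 2) d e).det = d * (tridiag (m + 1) d e).det - e ^ 2 * (tridiag m d e).det := by
  rw [det_succ_row_zero, Fin.sum_univ_succ, Fin.sum_univ_succ, Finset.sum_eq_zero]
  · simp [tridiag_submatrix_succ, det_tridiag_minor_zero_one, tridiag, sq, sub_eq_add_neg,
      mul_assoc]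
  · intro i _
    simp [tridiag, Fin.ext_iff]

theorem det_tridiag_add_of_sq_eq_mul {u v e : R} (h : e ^ 2 = u * v) :
    ∀ m : ℕ, (u - v) * (tridiag m (u + v) e).det = u ^ (m + 1) - v ^ (m + 1)
  | 0 => by simp
  | 1 => by simp only [det_fin_one, tridiag, ↓reduceIte]; ring
  | m + 2 => by
    rw [det_tridiag_succ_succ]
    linear_combination (u + v) * det_tridiag_add_of_sq_eq_mul h (m + 1)
      - u * v * det_tridiag_add_of_sq_eq_mul h m - (u - v) * (tridiag m (u + v) e).det * h

theorem det_tridiag_two_mul_neg (c : R) :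
    ∀ m : ℕ, (tridiag m (2 * c) (-c)).det = (m + 1) * c ^ m
  | 0 => by simp
  | 1 => by simp only [det_fin_one, tridiag, ↓reduceIte]; ring
  | m + 2 => by
    rw [det_tridiag_succ_succ, det_tridiag_two_mul_neg c (m + 1), det_tridiag_two_mul_neg c m]
    push_cast
    ring

theorem tridiag_apply_eq_sum_ite {m : ℕ} (d e : R) (k i : Fin m) :
    tridiag m d e k i = (if (k : ℕ) + 1 = i then e else 0) + (if (k : ℕ) + 1 = i + 1 then d else 0)
      + (if (k : ℕ) + 1 = i + 2 then e else 0) := by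
  simp only [tridiag, Fin.ext_iff]
  split_ifs <;> first | omega | simp

theorem sum_mul_tridiag_apply {m : ℕ} (d e : R) (g : ℕ → R) (h0 : g 0 = 0) (hm : g (m + 1) = 0)
    (i : Fin m) :
    ∑ k : Fin m, g (k + 1) * tridiag m d e k i = e * g i + d * g (i + 1) + e * g (i + 2) := by
  set c : ℕ → R := fun a =>
    (if a = (i : ℕ) then e else 0) + (if a = (i : ℕ) + 1 then d else 0)
      + (if a = (i : ℕ) + 2 then e else 0)
  -- the zero boundary values let the sum run over all of `range (m + 2)`
  have hsum : ∑ k : Fin m, g (k + 1) * tridiag m d e k i = ∑ a ∈ range (m + 2), g a * c a := by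
    rw [Finset.sum_range_succ, Finset.sum_range_succ', h0, hm, ← Fin.sum_univ_eq_sum_range]
    simp [c, tridiag_apply_eq_sum_ite]
  have hi := i.isLt
  rw [hsum]
  simp [c, mul_add, Finset.sum_add_distrib, Finset.sum_ite_eq', show (i : ℕ) < m + 2 by omega,
    mul_comm]

theorem tridiag_sub_smul_one (m : ℕ) (d e c : R) :
    tridiag m d e - c • 1 = tridiag m (d - c) e := by
  ext i j
  by_cases h : i = j <;> simp [tridiag, h]

end Matrix

def greenKernel (n a b : ℕ) : ℝ := ((min a b : ℕ) : ℝ) / n - (a : ℝ) * (b : ℝ) / (n : ℝ) ^ 2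

theorem greenKernel_zero_right (n a : ℕ) : greenKernel n a 0 = 0 := by
  simp [greenKernel]

theorem greenKernel_self_right {n a : ℕ} (ha : a ≤ n) : greenKernel n a n = 0 := by
  rcases Nat.eq_zero_or_pos n with rfl | hn
  · simp [greenKernel]
  · simp only [greenKernel, min_eq_left ha]
    field_simp
    ring

theorem cast_min_second_difference (a b : ℕ) :
    2 * ((min a (b + 1) : ℕ) : ℝ) - (min a b : ℕ) - (min a (b + 2) : ℕ)
      = if a = b + 1 then 1 else 0 := by
  rcases lt_trichotomy a (b + 1) with h | rfl | h
  · rw [if_neg h.ne, min_eq_left h.le, min_eq_left (by omega), min_eq_left (by omega)]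
    ring
  · rw [if_pos rfl, min_self, min_eq_right (by omega), min_eq_left (by omega)]
    push_cast
    ring
  · rw [if_neg h.ne', min_eq_right h.le, min_eq_right (by omega), min_eq_right (by omega)]
    push_cast
    ring

theorem greenKernel_second_difference {n : ℕ} (hn : n ≠ 0) (a b : ℕ) :
    -n * greenKernel n a b + 2 * n * greenKernel n a (b + 1) + -n * greenKernel n a (b + 2)
      = if a = b + 1 then 1 else 0 := by
  rw [← cast_min_second_difference]
  simp only [greenKernel]
  field_simp
  push_cast
  ring

theorem Kmat_apply (n : ℕ) (j k : Fin (n - 1)) : Kmat n j k = greenKernel n (j + 1) (k + 1) :=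
  rfl

theorem Kmat_mul_tridiag (n : ℕ) :
    Kmat n * Matrix.tridiag (n - 1) (2 * (n : ℝ)) (-n) = 1 := by
  rcases Nat.eq_zero_or_pos n with rfl | hn
  · ext j
    exact absurd j.isLt (by simp)
  ext j i
  rw [Matrix.mul_apply]
  simp only [Kmat_apply]
  rw [Matrix.sum_mul_tridiag_apply (g := greenKernel n (j + 1)) _ _ (greenKernel_zero_right _ _)
    (by rw [Nat.sub_add_cancel hn]; exact greenKernel_self_right (by omega))]
  rw [greenKernel_second_difference hn.ne', Matrix.one_apply]
  simp [Fin.ext_iff]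

theorem det_tridiag_natCast (n : ℕ) (hn : n ≠ 0) :
    (Matrix.tridiag (n - 1) (2 * (n : ℝ)) (-n)).det = n ^ n := by
  obtain ⟨m, rfl⟩ := Nat.exists_eq_succ_of_ne_zero hn
  rw [Nat.succ_sub_one, Matrix.det_tridiag_two_mul_neg, pow_succ', Nat.cast_succ]

theorem dpoly_mul_pow (n : ℕ) (lam : ℝ) :
    dpoly n lam * n ^ n = (Matrix.tridiag (n - 1) (2 * n - lam) (-n : ℝ)).det := by
  rcases Nat.eq_zero_or_pos n with rfl | hn
  · simp [dpoly]
  rw [dpoly, ← det_tridiag_natCast n hn.ne', ← Matrix.det_mul, sub_mul, one_mul, Matrix.smul_mul,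
    Kmat_mul_tridiag, Matrix.tridiag_sub_smul_one]

theorem two_mul_choose_mul_le_pow_sub_pow {c t : ℝ} (hc : 0 ≤ c) (ht : 0 ≤ t) {n j : ℕ}
    (hj : Odd j) (hjn : j ≤ n) :
    2 * n.choose j * c ^ (n - j) * t ^ j ≤ (c + t) ^ n - (c - t) ^ n := by
  have hexpand : (c + t) ^ n - (c - t) ^ n
      = ∑ k ∈ range (n + 1), (t ^ k - (-t) ^ k) * c ^ (n - k) * n.choose k := by
    rw [add_comm c, show c - t = -t + c by ring, add_pow, add_pow, ← sum_sub_distrib]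
    exact sum_congr rfl fun k _ => by ring
  have hnonneg : ∀ k ∈ range (n + 1), 0 ≤ (t ^ k - (-t) ^ k) * c ^ (n - k) * n.choose k := by
    intro k _
    rcases k.even_or_odd with hk | hk
    · simp [hk.neg_pow]
    · rw [hk.neg_pow, sub_neg_eq_add, ← two_mul]
      positivity
  calc 2 * n.choose j * c ^ (n - j) * t ^ j
      = (t ^ j - (-t) ^ j) * c ^ (n - j) * n.choose j := by rw [hj.neg_pow]; ring
    _ ≤ _ := hexpand ▸ single_le_sum hnonneg (mem_range.2 (by omega))

theorem choose_mul_le_det_tridiag {c t e : ℝ} (hc : 0 ≤ c) (ht : 0 < t) (he : e ^ 2 + t ^ 2 = c ^ 2)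
    {m j : ℕ} (hj : Odd j) (hjm : j ≤ m + 1) :
    (m + 1).choose j * c ^ (m + 1 - j) * t ^ (j - 1) ≤ (Matrix.tridiag m (2 * c) e).det := by
  have hdet := Matrix.det_tridiag_add_of_sq_eq_mul (u := c + t) (v := c - t) (e := e)
    (by linear_combination he) m
  rw [show c + t - (c - t) = 2 * t by ring, show c + t + (c - t) = 2 * c by ring] at hdet
  have hbound := two_mul_choose_mul_le_pow_sub_pow hc ht.le hj hjm
  rw [← hdet, ← pow_sub_one_mul hj.pos.ne'] at hbound
  refine le_of_mul_le_mul_left ?_ (by positivity : (0 : ℝ) < 2 * t)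
  linarith

/-- For `n >= 11` and `s >= 0`, `d_n(-2s/n) >= 2^5 * C(n,11) * n^{-11} * s^5`. -/
theorem dpoly_ge_poly (n : ℕ) (hn : 11 ≤ n) (s : ℝ) (hs : 0 ≤ s) :
    2 ^ 5 * (n.choose 11 : ℝ) * ((n : ℝ) ^ 11)⁻¹ * s ^ 5 ≤ dpoly n (-2 * s / n) := by
  rcases hs.eq_or_lt with rfl | hs_pos
  · simp [dpoly]
  have hn_pos : (0 : ℝ) < n := Nat.cast_pos.2 (by omega)
  set c : ℝ := n + s / n
  set t : ℝ := √(2 * s + (s / n) ^ 2)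
  have ht_sq : t ^ 2 = 2 * s + (s / n) ^ 2 := Real.sq_sqrt (by positivity)
  have hdet := choose_mul_le_det_tridiag (c := c) (t := t) (e := -n) (m := n - 1) (j := 11)
    (by positivity) (by positivity) (by rw [ht_sq]; simp only [c]; field_simp; ring) (by decide)
    (by omega)
  rw [Nat.sub_add_cancel (by omega), show 2 * c = 2 * n - (-2 * s / n) by ring,
    ← dpoly_mul_pow] at hdet
  have hc : (n : ℝ) ^ (n - 11) ≤ c ^ (n - 11) :=
    pow_le_pow_left₀ hn_pos.le (le_add_of_nonneg_right (by positivity)) _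
  have ht : (2 * s) ^ 5 ≤ t ^ (11 - 1) := by
    rw [show 11 - 1 = 2 * 5 from rfl, pow_mul, ht_sq]
    exact pow_le_pow_left₀ (by positivity) (le_add_of_nonneg_right (by positivity)) 5
  rw [← mul_le_mul_iff_left₀ (pow_pos hn_pos n)]
  calc 2 ^ 5 * (n.choose 11 : ℝ) * ((n : ℝ) ^ 11)⁻¹ * s ^ 5 * n ^ n
      = n.choose 11 * (n : ℝ) ^ (n - 11) * (2 * s) ^ 5 := by
        rw [← pow_sub_mul_pow _ hn]
        field_simp
    _ ≤ n.choose 11 * c ^ (n - 11) * t ^ (11 - 1) := by gcongr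
    _ ≤ _ := hdet

end
end
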